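/- arXiv:1206.3922 — 5 statements merged into one kernel-verified Lean document; each statement's English description precedes it below -/
import Mathlib

section
/- The number of plane partitions with at most m rows, at most n columns, and largest part at most 2 equals (1/(m+n+1)) * C(m+n+1, m+1) * C(m+n+1, m). -/
/-!
Row `i` of a plane partition with parts at most 2 is determined by the numbers `ν₁ i ≤ ν₂ i` of
its entries below 1 and below 2; both sequences are weakly increasing and bounded by `n`. The
β-set `{i + ν i}` encodes such a sequence by an `m`-subset of `{0, …, m + n - 1}`, and `ν₁ ≤ ν₂`
becomes: below every threshold, the β-set of `ν₁` has at least as many elements as that of `ν₂`.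
For a pair violating this, swapping the two sets below the first threshold where it fails
(the reflection principle) yields an arbitrary pair of an `(m + 1)`-set and an `(m - 1)`-set.
Hence the count is the Lindström–Gessel–Viennot determinant
`C(m+n, m)² - C(m+n, m+1) C(m+n, m-1)`, which equals the stated product.
-/

open Finset

theorem choose_sq_sub_choose_mul_choose {N m : ℕ} (h : m < N) :
    ((N.choose (m + 1) : ℚ) ^ 2 - N.choose (m + 2) * N.choose m) =
      1 / (N + 1) * (N + 1).choose (m + 2) * (N + 1).choose (m + 1) := by
  obtain ⟨n, rfl⟩ := Nat.exists_eq_add_of_lt h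
  set c := (m + n + 1).choose (m + 1)
  have h₁ := Nat.choose_succ_right_eq (m + n + 1) (m + 1)
  have h₂ := Nat.choose_succ_right_eq (m + n + 1) m
  rw [show m + n + 1 - (m + 1) = n by omega] at h₁
  rw [show m + n + 1 - m = n + 1 by omega] at h₂
  have hx : ((m + n + 1).choose (m + 2) : ℚ) = c * n / (m + 2) := by
    rw [eq_div_iff (by positivity)]; exact_mod_cast h₁
  have hy : ((m + n + 1).choose m : ℚ) = c * (m + 1) / (n + 1) := by
    rw [eq_div_iff (by positivity)]; exact_mod_cast h₂.symm
  have hu : ((m + n + 1 + 1).choose (m + 2) : ℚ) = (m + n + 2) * c / (m + 2) := by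
    rw [eq_div_iff (by positivity)]
    exact_mod_cast (Nat.add_one_mul_choose_eq (m + n + 1) (m + 1)).symm
  have hv : ((m + n + 1 + 1).choose (m + 1) : ℚ) = (m + n + 2) * (m + n + 1).choose m / (m + 1) := by
    rw [eq_div_iff (by positivity)]
    exact_mod_cast (Nat.add_one_mul_choose_eq (m + n + 1) m).symm
  rw [hu, hv, hx, hy]
  push_cast
  field_simp
  ring

namespace PlanePartition

def countBelow (S : Finset ℕ) (k : ℕ) : ℕ := #{x ∈ S | x < k}

lemma countBelow_zero (S : Finset ℕ) : countBelow S 0 = 0 := by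
  simp [countBelow]

lemma countBelow_mono (S : Finset ℕ) : Monotone (countBelow S) := fun _ _ h =>
  card_le_card (monotone_filter_right S fun _ _ hx => lt_of_lt_of_le hx h)

lemma countBelow_succ_le (S : Finset ℕ) (k : ℕ) : countBelow S (k + 1) ≤ countBelow S k + 1 := by
  have : {x ∈ S | x < k + 1} ⊆ insert k {x ∈ S | x < k} := by
    intro x; simp only [mem_filter, mem_insert]; grind
  exact (card_le_card this).trans (card_insert_le _ _)

lemma countBelow_of_subset_range {S : Finset ℕ} {k : ℕ} (h : S ⊆ range k) :
    countBelow S k = #S := by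
  rw [countBelow, filter_true_of_mem fun x hx => mem_range.mp (h hx)]

lemma countBelow_add_card_filter_le (S : Finset ℕ) (k : ℕ) :
    countBelow S k + #{x ∈ S | k ≤ x} = #S := by
  simpa only [countBelow, not_lt] using card_filter_add_card_filter_not (s := S) (· < k)

def swapBelow (k : ℕ) (p : Finset ℕ × Finset ℕ) : Finset ℕ × Finset ℕ :=
  ({x ∈ p.2 | x < k} ∪ {x ∈ p.1 | k ≤ x}, {x ∈ p.1 | x < k} ∪ {x ∈ p.2 | k ≤ x})

lemma swapBelow_swapBelow (k : ℕ) (p : Finset ℕ × Finset ℕ) :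
    swapBelow k (swapBelow k p) = p := by
  ext x <;> simp only [swapBelow, mem_union, mem_filter] <;> grind

lemma swapBelow_swap (k : ℕ) (p : Finset ℕ × Finset ℕ) :
    swapBelow k p.swap = (swapBelow k p).swap := rfl

lemma countBelow_swapBelow_fst {j k : ℕ} (hjk : j ≤ k) (p : Finset ℕ × Finset ℕ) :
    countBelow (swapBelow k p).1 j = countBelow p.2 j := by
  unfold countBelow swapBelow
  congr 1
  ext x; simp only [mem_filter, mem_union]; grind

lemma countBelow_swapBelow_snd {j k : ℕ} (hjk : j ≤ k) (p : Finset ℕ × Finset ℕ) :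
    countBelow (swapBelow k p).2 j = countBelow p.1 j :=
  countBelow_swapBelow_fst hjk p.swap

lemma card_swapBelow_fst (k : ℕ) (p : Finset ℕ × Finset ℕ) :
    #(swapBelow k p).1 + countBelow p.1 k = #p.1 + countBelow p.2 k := by
  have hdisj : Disjoint {x ∈ p.2 | x < k} {x ∈ p.1 | k ≤ x} :=
    disjoint_left.mpr fun _ h₁ h₂ => (not_le.mpr (mem_filter.mp h₁).2) (mem_filter.mp h₂).2
  rw [swapBelow, card_union_of_disjoint hdisj, ← countBelow_add_card_filter_le p.1 k]
  unfold countBelow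
  omega

lemma card_swapBelow_snd (k : ℕ) (p : Finset ℕ × Finset ℕ) :
    #(swapBelow k p).2 + countBelow p.2 k = #p.2 + countBelow p.1 k :=
  card_swapBelow_fst k p.swap

lemma swapBelow_subset {s : Finset ℕ} (k : ℕ) {p : Finset ℕ × Finset ℕ} (h₁ : p.1 ⊆ s)
    (h₂ : p.2 ⊆ s) : (swapBelow k p).1 ⊆ s ∧ (swapBelow k p).2 ⊆ s :=
  ⟨union_subset ((filter_subset _ _).trans h₂) ((filter_subset _ _).trans h₁),
    union_subset ((filter_subset _ _).trans h₁) ((filter_subset _ _).trans h₂)⟩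

/-- `0` if `T` never gets ahead of `S`. -/
noncomputable def firstExcess (S T : Finset ℕ) : ℕ := sInf {k | countBelow S k < countBelow T k}

lemma countBelow_firstExcess {S T : Finset ℕ} (h : ∃ k, countBelow S k < countBelow T k) :
    countBelow T (firstExcess S T) = countBelow S (firstExcess S T) + 1 := by
  have hc : countBelow S (firstExcess S T) < countBelow T (firstExcess S T) := Nat.sInf_mem h
  obtain ⟨c, hc'⟩ : ∃ d, firstExcess S T = d + 1 := Nat.exists_eq_succ_of_ne_zero fun h0 => by
    simp [h0, countBelow_zero] at hc
  rw [hc'] at hc ⊢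
  have hbefore : ¬ countBelow S c < countBelow T c :=
    Nat.notMem_of_lt_sInf (s := {k | countBelow S k < countBelow T k}) (by
      rw [← firstExcess, hc']; exact Nat.lt_succ_self c)
  have := countBelow_succ_le T c
  have := countBelow_mono S (Nat.le_add_right c 1)
  omega

lemma firstExcess_eq {S T : Finset ℕ} {c : ℕ} (hc : countBelow S c < countBelow T c)
    (hbefore : ∀ j < c, countBelow T j ≤ countBelow S j) : firstExcess S T = c :=
  le_antisymm (Nat.sInf_le hc) <| not_lt.mp fun hlt =>
    (hbefore _ hlt).not_gt (Nat.sInf_mem (s := {k | countBelow S k < countBelow T k}) ⟨c, hc⟩)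

lemma firstExcess_swapBelow {p : Finset ℕ × Finset ℕ}
    (h : ∃ k, countBelow p.1 k < countBelow p.2 k) :
    firstExcess (swapBelow (firstExcess p.1 p.2) p).2 (swapBelow (firstExcess p.1 p.2) p).1 =
      firstExcess p.1 p.2 := by
  apply firstExcess_eq
  · rw [countBelow_swapBelow_fst le_rfl, countBelow_swapBelow_snd le_rfl]
    exact Nat.sInf_mem h
  · intro j hj
    rw [countBelow_swapBelow_fst hj.le, countBelow_swapBelow_snd hj.le]
    exact not_lt.mp (Nat.notMem_of_lt_sInf (s := {k | countBelow p.1 k < countBelow p.2 k}) hj)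

lemma card_swapBelow_firstExcess {p : Finset ℕ × Finset ℕ}
    (h : ∃ k, countBelow p.1 k < countBelow p.2 k) :
    #(swapBelow (firstExcess p.1 p.2) p).1 = #p.1 + 1 ∧
      #(swapBelow (firstExcess p.1 p.2) p).2 + 1 = #p.2 := by
  have := countBelow_firstExcess h
  have := card_swapBelow_fst (firstExcess p.1 p.2) p
  have := card_swapBelow_snd (firstExcess p.1 p.2) p
  omega

lemma exists_countBelow_lt_of_card_lt {S T : Finset ℕ} (h : #S < #T) :
    ∃ k, countBelow S k < countBelow T k := by
  obtain ⟨N, hN⟩ := (S ∪ T).exists_nat_subset_range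
  refine ⟨N, ?_⟩
  rwa [countBelow_of_subset_range (subset_union_left.trans hN),
    countBelow_of_subset_range (subset_union_right.trans hN)]

open Classical in
theorem card_filter_exists_countBelow_lt (s : Finset ℕ) {a b : ℕ} (hba : b ≤ a) :
    #{p ∈ powersetCard a s ×ˢ powersetCard (b + 1) s |
        ∃ k, countBelow p.1 k < countBelow p.2 k} =
      #(powersetCard (a + 1) s ×ˢ powersetCard b s) := by
  refine card_nbij' (fun p => swapBelow (firstExcess p.1 p.2) p)
    (fun q => swapBelow (firstExcess q.2 q.1) q) ?_ ?_ ?_ ?_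
  · rintro p hp
    simp only [coe_filter, mem_product, mem_powersetCard, Set.mem_ofPred_eq] at hp
    obtain ⟨⟨⟨hs₁, hcard₁⟩, hs₂, hcard₂⟩, hbad⟩ := hp
    have hcard := card_swapBelow_firstExcess hbad
    have hsub := swapBelow_subset (firstExcess p.1 p.2) hs₁ hs₂
    simp only [coe_product, Set.mem_prod, mem_coe, mem_powersetCard]
    exact ⟨⟨hsub.1, by omega⟩, hsub.2, by omega⟩
  · rintro q hq
    simp only [coe_product, Set.mem_prod, mem_coe, mem_powersetCard] at hq
    obtain ⟨⟨hs₁, hcard₁⟩, hs₂, hcard₂⟩ := hq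
    have hex : ∃ k, countBelow q.swap.1 k < countBelow q.swap.2 k :=
      exists_countBelow_lt_of_card_lt (by simp only [Prod.fst_swap, Prod.snd_swap]; omega)
    have hcard := card_swapBelow_firstExcess hex
    simp only [Prod.fst_swap, Prod.snd_swap, swapBelow_swap] at hcard
    have hsub := swapBelow_subset (firstExcess q.2 q.1) hs₁ hs₂
    simp only [coe_filter, mem_product, mem_powersetCard, Set.mem_ofPred_eq]
    refine ⟨⟨⟨hsub.1, by omega⟩, hsub.2, by omega⟩, firstExcess q.2 q.1, ?_⟩
    rw [countBelow_swapBelow_fst le_rfl, countBelow_swapBelow_snd le_rfl]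
    exact Nat.sInf_mem hex
  · rintro p hp
    simp only [coe_filter, Set.mem_ofPred_eq] at hp
    simp only [firstExcess_swapBelow hp.2, swapBelow_swapBelow]
  · rintro q hq
    simp only [coe_product, Set.mem_prod, mem_coe, mem_powersetCard] at hq
    have hex : ∃ k, countBelow q.swap.1 k < countBelow q.swap.2 k :=
      exists_countBelow_lt_of_card_lt (by simp only [Prod.fst_swap, Prod.snd_swap]; omega)
    have := firstExcess_swapBelow hex
    simp only [Prod.fst_swap, Prod.snd_swap, swapBelow_swap] at this
    simp only [this, swapBelow_swapBelow]

open Classical in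
theorem card_filter_forall_countBelow_le_add (s : Finset ℕ) (m : ℕ) :
    #{p ∈ powersetCard (m + 1) s ×ˢ powersetCard (m + 1) s |
        ∀ k, countBelow p.2 k ≤ countBelow p.1 k} + (#s).choose (m + 2) * (#s).choose m =
      (#s).choose (m + 1) ^ 2 := by
  rw [← card_powersetCard, ← card_powersetCard, ← card_product,
    ← card_filter_exists_countBelow_lt s (Nat.le_succ m), sq, ← card_powersetCard,
    ← card_product, ← card_filter_add_card_filter_not
      (s := powersetCard (m + 1) s ×ˢ powersetCard (m + 1) s)
      (fun p => ∀ k, countBelow p.2 k ≤ countBelow p.1 k)]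
  simp only [not_forall, not_le]

variable {m n : ℕ}

lemma add_sub_le_of_strictMono {f : Fin m → ℕ} (hf : StrictMono f) {i j : Fin m} (hij : i ≤ j) :
    f i + (j - i) ≤ f j := by
  obtain ⟨d, hd⟩ := Nat.exists_eq_add_of_le (Fin.le_def.mp hij)
  induction d generalizing j with
  | zero => rw [Fin.ext (hd.trans (add_zero _))]; simp
  | succ d ih =>
    have hlt : (⟨i + d, by omega⟩ : Fin m) < j := Fin.lt_def.mpr (by simp; omega)
    have := ih (j := ⟨i + d, by omega⟩) (Fin.le_def.mpr (by simp)) rfl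
    have := hf hlt
    simp only at *
    omega

lemma forall_le_iff_card_filter_lt_le {f g : Fin m → ℕ} (hf : StrictMono f) (hg : StrictMono g) :
    (∀ i, f i ≤ g i) ↔ ∀ k, #{i | g i < k} ≤ #{i | f i < k} := by
  refine ⟨fun hfg k => card_le_card (monotone_filter_right _ fun i _ h => (hfg i).trans_lt h),
    fun hcount => ?_⟩
  by_contra! ⟨i, hi⟩
  have hg_le : Iic i ⊆ ({r | g r < f i} : Finset (Fin m)) := fun r hr => by
    simp only [mem_filter, mem_univ, true_and]
    exact (hg.monotone (mem_Iic.mp hr)).trans_lt hi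
  have hf_le : ({r | f r < f i} : Finset (Fin m)) ⊆ Iio i := fun r hr => by
    simp only [mem_filter, mem_univ, true_and] at hr
    exact mem_Iio.mpr (hf.lt_iff_lt.mp hr)
  have := (card_le_card hg_le).trans ((hcount (f i)).trans (card_le_card hf_le))
  simp at this

lemma countBelow_image {f : Fin m → ℕ} (hf : Function.Injective f) (k : ℕ) :
    countBelow (univ.image f) k = #{i | f i < k} := by
  rw [countBelow, filter_image, card_image_of_injective _ hf]

def betaSet (ν : Fin m → ℕ) : Finset ℕ := univ.image fun i : Fin m => (i : ℕ) + ν i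

lemma strictMono_add_of_monotone {ν : Fin m → ℕ} (hν : Monotone ν) :
    StrictMono fun i : Fin m => (i : ℕ) + ν i :=
  fun _ _ hij => add_lt_add_of_lt_of_le hij (hν hij.le)

lemma card_betaSet {ν : Fin m → ℕ} (hν : Monotone ν) : #(betaSet ν) = m := by
  rw [betaSet, card_image_of_injective _ (strictMono_add_of_monotone hν).injective, card_univ,
    Fintype.card_fin]

lemma orderEmbOfFin_betaSet {ν : Fin m → ℕ} (hν : Monotone ν) (h : #(betaSet ν) = m)
    (i : Fin m) : (betaSet ν).orderEmbOfFin h i = i + ν i :=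
  (congrFun (orderEmbOfFin_unique h (fun i => mem_image_of_mem _ (mem_univ i))
    (strictMono_add_of_monotone hν)) i).symm

lemma betaSet_subset_range {ν : Fin m → ℕ} (hν : ∀ i, ν i ≤ n) : betaSet ν ⊆ range (m + n) := by
  simp only [betaSet, image_subset_iff, mem_univ, mem_range, forall_const]
  intro i
  have := hν i
  omega

lemma le_iff_countBelow_betaSet_le {ν μ : Fin m → ℕ} (hν : Monotone ν) (hμ : Monotone μ) :
    ν ≤ μ ↔ ∀ k, countBelow (betaSet μ) k ≤ countBelow (betaSet ν) k := by
  simp only [betaSet, countBelow_image (strictMono_add_of_monotone hν).injective,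
    countBelow_image (strictMono_add_of_monotone hμ).injective,
    ← forall_le_iff_card_filter_lt_le (strictMono_add_of_monotone hν)
      (strictMono_add_of_monotone hμ), Pi.le_def, add_le_add_iff_left]

def ofBetaSet (S : Finset ℕ) (h : #S = m) (i : Fin m) : ℕ := S.orderEmbOfFin h i - i

lemma monotone_ofBetaSet (S : Finset ℕ) (h : #S = m) : Monotone (ofBetaSet S h) := fun i j hij => by
  have := add_sub_le_of_strictMono (S.orderEmbOfFin h).strictMono hij
  unfold ofBetaSet
  omega

lemma ofBetaSet_le {S : Finset ℕ} (hS : S ⊆ range (m + n)) (h : #S = m) (i : Fin m) :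
    ofBetaSet S h i ≤ n := by
  have hlast : i ≤ ⟨m - 1, by have := i.isLt; omega⟩ := Fin.le_def.mpr (by simp; omega)
  have := add_sub_le_of_strictMono (S.orderEmbOfFin h).strictMono hlast
  have := mem_range.mp (hS (S.orderEmbOfFin_mem h ⟨m - 1, by have := i.isLt; omega⟩))
  unfold ofBetaSet
  simp only at *
  omega

lemma ofBetaSet_betaSet {ν : Fin m → ℕ} (hν : Monotone ν) (h : #(betaSet ν) = m) :
    ofBetaSet (betaSet ν) h = ν := by
  ext i
  simp [ofBetaSet, orderEmbOfFin_betaSet hν]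

lemma betaSet_ofBetaSet (S : Finset ℕ) (h : #S = m) : betaSet (ofBetaSet S h) = S := by
  have hle (i : Fin m) : (i : ℕ) ≤ S.orderEmbOfFin h i := by
    have := add_sub_le_of_strictMono (S.orderEmbOfFin h).strictMono
      (show (⟨0, by have := i.isLt; omega⟩ : Fin m) ≤ i from Fin.le_def.mpr (Nat.zero_le _))
    simp only at this
    omega
  conv_rhs => rw [← image_orderEmbOfFin_univ S h]
  unfold betaSet
  refine image_congr fun i _ => ?_
  simp only [ofBetaSet]
  have := hle i
  omega

abbrev BoundedMonotone (m n : ℕ) := {ν : Fin m → ℕ // Monotone ν ∧ ∀ i, ν i ≤ n}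

def betaSetEquiv : BoundedMonotone m n ≃ powersetCard m (range (m + n)) where
  toFun ν := ⟨betaSet ν.1, mem_powersetCard.mpr ⟨betaSet_subset_range ν.2.2, card_betaSet ν.2.1⟩⟩
  invFun S := ⟨ofBetaSet S.1 (mem_powersetCard.mp S.2).2, monotone_ofBetaSet _ _,
    ofBetaSet_le (mem_powersetCard.mp S.2).1 _⟩
  left_inv ν := Subtype.ext (ofBetaSet_betaSet ν.2.1 _)
  right_inv S := Subtype.ext (betaSet_ofBetaSet S.1 _)

lemma lt_iff_le_add_card_filter_lt {r : Fin n → ℕ} (hr : Antitone r) (c : ℕ) (j : Fin n) :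
    r j < c ↔ n ≤ j + #{j' | r j' < c} := by
  have hge := Tuple.lt_card_ge_iff_apply_ge_of_antitone (j := j) (a := c) hr
  have hsum := card_filter_add_card_filter_not (s := univ) (fun j' => r j' < c)
  simp only [not_lt, card_univ, Fintype.card_fin] at hsum
  rw [← not_le, ← hge]
  omega

lemma card_filter_le_add {v : ℕ} (hv : v ≤ n) : #{j : Fin n | n ≤ j + v} = v := by
  have hsum := card_filter_add_card_filter_not (s := univ) (fun j : Fin n => (j : ℕ) < n - v)
  rw [Fin.card_filter_val_lt, card_univ, Fintype.card_fin,
    filter_congr (q := fun j : Fin n => n ≤ j + v) (fun j _ => by omega)] at hsum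
  omega

def planePartitionEquiv :
    {π : Fin m → Fin n → ℕ //
        (∀ i j, π i j ≤ 2) ∧ (∀ i i' j j', i ≤ i' → j ≤ j' → π i' j' ≤ π i j)} ≃
      {ν : BoundedMonotone m n × BoundedMonotone m n // ν.1.1 ≤ ν.2.1} where
  toFun π :=
    have hmono (c : ℕ) : Monotone fun i => #{j | π.1 i j < c} := fun i i' hii' =>
      card_le_card (monotone_filter_right _ fun j _ h => (π.2.2 i i' j j hii' le_rfl).trans_lt h)
    have hle (c : ℕ) (i : Fin m) : #{j | π.1 i j < c} ≤ n := (card_le_univ _).trans_eq (by simp)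
    ⟨(⟨_, hmono 1, hle 1⟩, ⟨_, hmono 2, hle 2⟩), fun i =>
      show #{j | π.1 i j < 1} ≤ #{j | π.1 i j < 2} from
        card_le_card (monotone_filter_right _ fun _ _ h => Nat.lt_succ_of_lt h)⟩
  invFun ν := ⟨fun i j => (if j + ν.1.1.1 i < n then 1 else 0) + (if j + ν.1.2.1 i < n then 1 else 0),
    fun i j => by beta_reduce; split_ifs <;> omega,
    fun i i' j j' hii' hjj' => by
      have := ν.1.1.2.1 hii'
      have := ν.1.2.2.1 hii'
      have : (j : ℕ) ≤ j' := hjj'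
      beta_reduce
      split_ifs <;> omega⟩
  left_inv π := by
    obtain ⟨π, hle, hanti⟩ := π
    ext i j
    have hrow : Antitone (π i) := fun j j' hjj' => hanti i i j j' le_rfl hjj'
    have h₁ := lt_iff_le_add_card_filter_lt hrow 1 j
    have h₂ := lt_iff_le_add_card_filter_lt hrow 2 j
    have := hle i j
    simp only
    split_ifs <;> grind
  right_inv ν := by
    obtain ⟨⟨⟨ν₁, hν₁, hν₁n⟩, ⟨ν₂, hν₂, hν₂n⟩⟩, hν⟩ := ν
    have h₁ (i : Fin m) : #{j : Fin n | (if j + ν₁ i < n then 1 else 0) +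
        (if j + ν₂ i < n then 1 else 0) < 1} = ν₁ i := by
      refine (congrArg card (filter_congr fun j _ => ?_)).trans (card_filter_le_add (hν₁n i))
      have : ν₁ i ≤ ν₂ i := hν i
      split_ifs <;> omega
    have h₂ (i : Fin m) : #{j : Fin n | (if j + ν₁ i < n then 1 else 0) +
        (if j + ν₂ i < n then 1 else 0) < 2} = ν₂ i := by
      refine (congrArg card (filter_congr fun j _ => ?_)).trans (card_filter_le_add (hν₂n i))
      have : ν₁ i ≤ ν₂ i := hν i
      split_ifs <;> omega
    ext i <;> simp only [h₁, h₂]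

open Classical in
def betaSetPairEquiv : {ν : BoundedMonotone m n × BoundedMonotone m n // ν.1.1 ≤ ν.2.1} ≃
    {p ∈ powersetCard m (range (m + n)) ×ˢ powersetCard m (range (m + n)) |
      ∀ k, countBelow p.2 k ≤ countBelow p.1 k} where
  toFun ν := ⟨((betaSetEquiv ν.1.1).1, (betaSetEquiv ν.1.2).1),
    mem_filter.mpr ⟨mem_product.mpr ⟨(betaSetEquiv ν.1.1).2, (betaSetEquiv ν.1.2).2⟩,
      (le_iff_countBelow_betaSet_le ν.1.1.2.1 ν.1.2.2.1).mp ν.2⟩⟩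
  invFun p :=
    have hp := mem_filter.mp p.2
    ⟨(betaSetEquiv.symm ⟨_, (mem_product.mp hp.1).1⟩, betaSetEquiv.symm ⟨_, (mem_product.mp hp.1).2⟩),
      (le_iff_countBelow_betaSet_le (monotone_ofBetaSet _ _) (monotone_ofBetaSet _ _)).mpr (by
        simp only [betaSet_ofBetaSet]
        exact hp.2)⟩
  left_inv ν := by simp
  right_inv p := by simp

end PlanePartition

/-- The number of plane partitions with at most `m` rows, at most `n` columns, and
largest part at most 2 equals `(1/(m+n+1)) * C(m+n+1, m+1) * C(m+n+1, m)`. -/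
theorem plane_partitions_le_two_count (m n : ℕ) :
    (Nat.card {π : Fin m → Fin n → ℕ //
        (∀ i j, π i j ≤ 2) ∧
        (∀ i i' j j', i ≤ i' → j ≤ j' → π i' j' ≤ π i j)} : ℚ) =
      (1 / ((m : ℚ) + n + 1)) * ((m + n + 1).choose (m + 1) : ℚ) *
        ((m + n + 1).choose m : ℚ) := by
  cases m with
  | zero => simp [Nat.cast_add_one_ne_zero]
  | succ m =>
    rw [Nat.card_congr (PlanePartition.planePartitionEquiv.trans PlanePartition.betaSetPairEquiv),
      Nat.card_eq_finsetCard]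
    have hcount := PlanePartition.card_filter_forall_countBelow_le_add (range (m + 1 + n)) m
    rw [card_range] at hcount
    have hcast := congrArg (Nat.cast : ℕ → ℚ) hcount
    push_cast at hcast
    rw [eq_sub_of_add_eq hcast, choose_sq_sub_choose_mul_choose (by omega)]
    push_cast
    ring_nf
end

section
/- The number of Galois connections between an m-chain and an n-chain is C(m+n-2, m-1), for m, n ≥ 1. -/
section aux

/-- value bound below for strict mono maps between Fin -/
lemma sm_le_apply {a c : ℕ} {h : Fin a → Fin c} (hs : StrictMono h) (i : Fin a) :
    (i : ℕ) ≤ h i := by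
  obtain ⟨iv, hi⟩ := i
  induction iv with
  | zero => exact Nat.zero_le _
  | succ k ih =>
    have hk : k < a := by omega
    have h1 := hs (show (⟨k, hk⟩ : Fin a) < ⟨k + 1, hi⟩ by simp [Fin.lt_def])
    have h2 := ih hk
    rw [Fin.lt_def] at h1
    simp only [Fin.val_mk] at h1 h2 ⊢
    omega

/-- value bound above for strict mono maps between Fin -/
lemma sm_apply_le {a c : ℕ} {h : Fin a → Fin c} (hs : StrictMono h) (j : Fin a) :
    (h j : ℕ) ≤ c - a + j := by
  have hs' : StrictMono (fun i : Fin a => (h i.rev).rev) := by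
    intro i j hij
    exact Fin.rev_lt_rev.mpr (hs (Fin.rev_lt_rev.mpr hij))
  have := sm_le_apply hs' j.rev
  simp only [Fin.rev_rev] at this
  have h1 : ((h j).rev : ℕ) = c - 1 - (h j : ℕ) := by simp [Fin.rev]; omega
  have h2 : ((j.rev : Fin a) : ℕ) = a - 1 - (j : ℕ) := by simp [Fin.rev]; omega
  have h3 := (h j).isLt
  have h4 := j.isLt
  omega

/-- the gap property for strict mono maps -/
lemma sm_gap {a c : ℕ} {h : Fin a → Fin c} (hs : StrictMono h) :
    ∀ (jv : ℕ) (hjv : jv < a) (iv : ℕ) (hiv : iv < a), iv ≤ jv →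
      (h ⟨iv, hiv⟩ : ℕ) + jv - iv ≤ h ⟨jv, hjv⟩ := by
  intro jv
  induction jv with
  | zero =>
    intro hjv iv hiv hle
    obtain rfl : iv = 0 := Nat.le_zero.mp hle
    have : h ⟨0, hiv⟩ = h ⟨0, hjv⟩ := rfl
    omega
  | succ k ih =>
    intro hjv iv hiv hle
    rcases Nat.lt_or_ge iv (k + 1) with hlt | hge
    · have h1 := ih (by omega) iv hiv (by omega)
      have h2 := hs (show (⟨k, by omega⟩ : Fin a) < ⟨k + 1, hjv⟩ from Fin.mk_lt_mk.mpr (by omega))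
      rw [Fin.lt_def] at h2
      omega
    · obtain rfl : iv = k + 1 := by omega
      have : h ⟨k + 1, hiv⟩ = h ⟨k + 1, hjv⟩ := rfl
      omega

end aux

/-- The number of (antitone) Galois connections between an `m`-chain and an
`n`-chain is `C(m+n-2, m-1)`, for `m, n ≥ 1`. -/
theorem galois_connections_chains_count (m n : ℕ) (hm : 1 ≤ m) (hn : 1 ≤ n) :
    Nat.card {p : (Fin m → Fin n) × (Fin n → Fin m) //
        Antitone p.1 ∧ Antitone p.2 ∧
        (∀ x, x ≤ p.2 (p.1 x)) ∧ (∀ y, y ≤ p.1 (p.2 y))} =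
      (m + n - 2).choose (m - 1) := by
  obtain ⟨m', rfl⟩ : ∃ m', m = m' + 1 := ⟨m - 1, by omega⟩
  obtain ⟨n', rfl⟩ : ∃ n', n = n' + 1 := ⟨n - 1, by omega⟩
  have key : Nat.card {p : (Fin (m'+1) → Fin (n'+1)) × (Fin (n'+1) → Fin (m'+1)) //
        Antitone p.1 ∧ Antitone p.2 ∧
        (∀ x, x ≤ p.2 (p.1 x)) ∧ (∀ y, y ≤ p.1 (p.2 y))} = (m' + n').choose m' := by
    -- Step 1: GC ≃ antitone maps with f 0 = ⊤
    have e1 : {p : (Fin (m'+1) → Fin (n'+1)) × (Fin (n'+1) → Fin (m'+1)) //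
        Antitone p.1 ∧ Antitone p.2 ∧
        (∀ x, x ≤ p.2 (p.1 x)) ∧ (∀ y, y ≤ p.1 (p.2 y))} ≃
        {f : Fin (m'+1) → Fin (n'+1) // Antitone f ∧ f 0 = Fin.last n'} := by
      -- helper: the adjoint determined by f
      classical
      refine
        { toFun := fun p => ⟨p.1.1, p.2.1, ?_⟩
          invFun := fun f =>
            ⟨(f.1, fun q => (Finset.univ.filter (fun p => q ≤ f.1 p)).max'
              ⟨0, by simp [f.2.2, Fin.le_last]⟩), ?_, ?_, ?_, ?_⟩
          left_inv := ?_
          right_inv := ?_ }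
      · -- p.1.1 0 = last
        obtain ⟨⟨φ, ψ⟩, hφ, hψ, h1, h2⟩ := p
        simp only at *
        have ha : Fin.last n' ≤ φ (ψ (Fin.last n')) := h2 _
        have hb : φ (ψ (Fin.last n')) ≤ φ 0 := hφ (Fin.zero_le _)
        exact le_antisymm (Fin.le_last _) (le_trans ha hb)
      · exact f.2.1
      · -- ψ antitone
        intro q q' hq
        refine Finset.max'_subset ⟨0, by simp [f.2.2, Fin.le_last]⟩ ?_
        intro p hp
        simp only [Finset.mem_filter, Finset.mem_univ, true_and] at hp ⊢
        exact le_trans hq hp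
      · -- x ≤ ψ (f x)
        intro x
        apply Finset.le_max'
        simp
      · -- q ≤ f (ψ q)
        intro q
        have := Finset.max'_mem (Finset.univ.filter (fun p => q ≤ f.1 p))
          ⟨0, by simp [f.2.2, Fin.le_last]⟩
        simpa using this
      · -- left inverse
        rintro ⟨⟨φ, ψ⟩, hφ, hψ, h1, h2⟩
        ext q
        · rfl
        · simp only
          set S := Finset.univ.filter (fun p => q ≤ φ p) with hS
          have hne : S.Nonempty := ⟨ψ q, by simp [hS, h2 q]⟩
          have hmem : ψ q ∈ S := by simp [hS, h2 q]
          refine congrArg Fin.val (le_antisymm ?_ ?_)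
          · apply Finset.max'_le
            intro p hp
            simp only [hS, Finset.mem_filter, Finset.mem_univ, true_and] at hp
            exact le_trans (h1 p) (hψ hp)
          · exact Finset.le_max' _ _ hmem
      · rintro ⟨f, hf, hf0⟩; rfl
    -- Step 2: drop the first coordinate
    have e2 : {f : Fin (m'+1) → Fin (n'+1) // Antitone f ∧ f 0 = Fin.last n'} ≃
        {g : Fin m' → Fin (n'+1) // Antitone g} := by
      refine
        { toFun := fun f => ⟨f.1 ∘ Fin.succ, f.2.1.comp_monotone (fun _ _ h => Fin.succ_le_succ_iff.mpr h)⟩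
          invFun := fun g => ⟨Fin.cases (Fin.last n') g.1, ?_, by simp⟩
          left_inv := ?_
          right_inv := ?_ }
      · intro a b hab
        induction b using Fin.cases with
        | zero =>
          have : a = 0 := le_antisymm hab (Fin.zero_le _)
          subst this; exact le_refl _
        | succ j =>
          induction a using Fin.cases with
          | zero => simp [Fin.le_last]
          | succ i =>
            simp only [Fin.cases_succ]
            exact g.2 (Fin.succ_le_succ_iff.mp hab)
      · rintro ⟨f, hf, hf0⟩
        ext x
        refine congrArg Fin.val ?_
        induction x using Fin.cases with
        | zero => simp [hf0]
        | succ i => simp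
      · rintro ⟨g, hg⟩
        ext i
        simp
    -- Step 3: antitone to monotone via rev
    have e3 : {g : Fin m' → Fin (n'+1) // Antitone g} ≃
        {g : Fin m' → Fin (n'+1) // Monotone g} := by
      refine
        { toFun := fun g => ⟨fun i => (g.1 i).rev, fun i j hij => Fin.rev_le_rev.mpr (g.2 hij)⟩
          invFun := fun g => ⟨fun i => (g.1 i).rev, fun i j hij => Fin.rev_le_rev.mpr (g.2 hij)⟩
          left_inv := ?_
          right_inv := ?_ }
      · rintro ⟨g, hg⟩; ext i; simp [Fin.rev_rev]
      · rintro ⟨g, hg⟩; ext i; simp [Fin.rev_rev]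
    -- Step 4: monotone to strict mono
    have e4 : {g : Fin m' → Fin (n'+1) // Monotone g} ≃
        {h : Fin m' → Fin (m' + n') // StrictMono h} := by
      refine
        { toFun := fun g => ⟨fun i => ⟨g.1 i + i, by
            have := (g.1 i).isLt; have := i.isLt; omega⟩, ?_⟩
          invFun := fun h => ⟨fun i => ⟨(h.1 i : ℕ) - i, by
            have := sm_apply_le h.2 i; have := i.isLt; omega⟩, ?_⟩
          left_inv := ?_
          right_inv := ?_ }
      · intro i j hij
        have := g.2 hij.le
        rw [Fin.lt_def] at hij ⊢
        rw [Fin.le_def] at this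
        simp only
        omega
      · intro i j hij
        have h1 := sm_gap h.2 j j.isLt i i.isLt (Fin.le_def.mp hij)
        have h2 := sm_le_apply h.2 i
        rw [Fin.le_def]
        simp only [Fin.eta] at h1
        simp only
        omega
      · rintro ⟨g, hg⟩; ext i; simp
      · rintro ⟨h, hh⟩
        ext i
        have := sm_le_apply hh i
        simp only
        omega
    -- Step 5: strict mono to finsets
    have e5 : {h : Fin m' → Fin (m' + n') // StrictMono h} ≃
        {s : Finset (Fin (m' + n')) // s.card = m'} := by
      classical
      refine
        { toFun := fun h => ⟨Finset.univ.image h.1, by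
            rw [Finset.card_image_of_injective _ h.2.injective, Finset.card_univ,
              Fintype.card_fin]⟩
          invFun := fun s => ⟨s.1.orderEmbOfFin s.2, (s.1.orderEmbOfFin s.2).strictMono⟩
          left_inv := ?_
          right_inv := ?_ }
      · rintro ⟨h, hh⟩
        refine Subtype.ext ?_
        symm
        exact Finset.orderEmbOfFin_unique _ (fun x => Finset.mem_image_of_mem _
          (Finset.mem_univ x)) hh
      · rintro ⟨s, hs⟩
        refine Subtype.ext ?_
        apply Finset.coe_injective
        rw [Finset.coe_image, Finset.coe_univ, Set.image_univ]
        exact Finset.range_orderEmbOfFin s hs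
    -- put it together
    rw [Nat.card_congr (((e1.trans e2).trans e3).trans (e4.trans e5))]
    classical
    rw [Nat.card_eq_fintype_card, Fintype.card_subtype]
    have : (Finset.univ.filter (fun s : Finset (Fin (m' + n')) => s.card = m')) =
        Finset.powersetCard m' Finset.univ := by
      ext s
      simp [Finset.mem_powersetCard_univ]
    rw [this, Finset.card_powersetCard, Finset.card_univ, Fintype.card_fin]
  rw [key]
  have h1 : m' + 1 + (n' + 1) - 2 = m' + n' := by omega
  have h2 : m' + 1 - 1 = m' := by omega
  rw [h1, h2]
end

section
/- The number of antitone Galois connections between the Boolean lattice of subsets of an m-element set and a chain with n+1 elements is (n+1)^m. -/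
/-- The number of antitone Galois connections between the Boolean lattice of
subsets of an `m`-element set and a chain with `n+1` elements is `(n+1)^m`. -/
theorem galois_connections_boolean_chain_count (m n : ℕ) :
    Nat.card {p : (Finset (Fin m) → Fin (n + 1)) × (Fin (n + 1) → Finset (Fin m)) //
        Antitone p.1 ∧ Antitone p.2 ∧
        (∀ A, A ≤ p.2 (p.1 A)) ∧ (∀ y, y ≤ p.1 (p.2 y))} =
      (n + 1) ^ m := by
  have e : {p : (Finset (Fin m) → Fin (n + 1)) × (Fin (n + 1) → Finset (Fin m)) //
        Antitone p.1 ∧ Antitone p.2 ∧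
        (∀ A, A ≤ p.2 (p.1 A)) ∧ (∀ y, y ≤ p.1 (p.2 y))} ≃ (Fin m → Fin (n + 1)) :=
  { toFun := fun p a => p.1.1 {a}
    invFun := fun f =>
      ⟨(fun A => A.inf f, fun y => Finset.univ.filter (fun a => y ≤ f a)),
        by
          refine ⟨?_, ?_, ?_, ?_⟩
          · intro A B h
            exact Finset.inf_mono h
          · intro y z h
            intro a ha
            simp only [Finset.mem_filter, Finset.mem_univ, true_and] at ha ⊢
            exact h.trans ha
          · intro A a ha
            simp only [Finset.mem_filter, Finset.mem_univ, true_and]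
            exact Finset.inf_le ha
          · intro y
            show y ≤ (Finset.univ.filter (fun a => y ≤ f a)).inf f
            refine Finset.le_inf fun a ha => ?_
            simpa using (Finset.mem_filter.mp ha).2⟩
    left_inv := by
      rintro ⟨⟨φ, ψ⟩, hφ, hψ, h1, h2⟩
      have hgc : ∀ (A : Finset (Fin m)) (y : Fin (n + 1)), A ≤ ψ y ↔ y ≤ φ A := by
        intro A y
        constructor
        · intro h
          exact (h2 y).trans (hφ h)
        · intro h
          exact (h1 A).trans (hψ h)
      have hmem : ∀ (a : Fin m) (y : Fin (n + 1)), a ∈ ψ y ↔ y ≤ φ {a} := by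
        intro a y
        rw [← Finset.singleton_subset_iff]
        exact hgc {a} y
      apply Subtype.ext
      apply Prod.ext
      · funext A
        apply le_antisymm
        · refine (hgc A _).mp ?_
          intro a ha
          exact (hmem a _).mpr (Finset.inf_le ha)
        · exact Finset.le_inf fun a ha => hφ (Finset.singleton_subset_iff.mpr ha)
      · funext y
        ext a
        simp only [Finset.mem_filter, Finset.mem_univ, true_and]
        exact (hmem a y).symm
    right_inv := by
      intro f
      funext a
      simp }
  rw [Nat.card_congr e]
  simp [Nat.card_eq_fintype_card]
end

section
/- For every n ≥ 1, the number of plane partitions with n rows, n columns and largest part at most 2 equals (2n)!(2n+1)! / (n!(n+1)!)². -/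
/-!
Recording, row by row, how many entries are `≥ 1` and how many are `≥ 2` turns a plane partition
with parts at most `2` in a `k × m` box into a pair of partitions `μ ⊆ λ` in that box, and
partitions in a `k × m` box are counted by `C(k + m, k)`. The pairs with `μ ⊄ λ` are counted by
the Lindström–Gessel–Viennot argument: swapping the tails of the two sequences of parts after
their first crossing identifies them with pairs of partitions in a `(k + 1) × (m - 1)` and a
`(k - 1) × (m + 1)` box. Hence there are `C(k + m, k)² - C(k + m, k + 1) C(k + m, k - 1)` plane
partitions, which for `k = m = n` is `(2n)! (2n + 1)! / (n! (n + 1)!)²`.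
-/

open Finset Nat

/-- A partition with at most `k` parts, each at most `m`, as its antitone sequence of parts. -/
@[ext]
structure BoxPartition (k m : ℕ) where
  toFun : ℕ → ℕ
  antitone : Antitone toFun
  le : toFun 0 ≤ m
  eq_zero : ∀ t, k ≤ t → toFun t = 0

namespace BoxPartition

variable {k m : ℕ}

instance : CoeFun (BoxPartition k m) fun _ => ℕ → ℕ := ⟨toFun⟩

lemma apply_le (f : BoxPartition k m) (t : ℕ) : f t ≤ m :=
  (f.antitone t.zero_le).trans f.le

lemma lt_of_pos (f : BoxPartition k m) {t : ℕ} (h : 0 < f t) : t < k := by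
  by_contra! ht
  simp [f.eq_zero t ht] at h

instance : Finite (BoxPartition k m) :=
  Finite.of_injective (fun f (t : Fin k) => (⟨f t, lt_succ_of_le (f.apply_le t)⟩ : Fin (m + 1)))
    fun f g h => BoxPartition.ext <| funext fun t => by
      by_cases ht : t < k
      · simpa using congrFun h ⟨t, ht⟩
      · rw [f.eq_zero t (not_lt.1 ht), g.eq_zero t (not_lt.1 ht)]

instance : Unique (BoxPartition 0 m) where
  default := ⟨0, antitone_const, m.zero_le, fun _ _ => rfl⟩
  uniq f := BoxPartition.ext <| funext fun t => f.eq_zero t t.zero_le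

instance : Unique (BoxPartition k 0) where
  default := ⟨0, antitone_const, le_rfl, fun _ _ => rfl⟩
  uniq f := BoxPartition.ext <| funext fun t => Nat.le_zero.1 (f.apply_le t)

/-- Either the last part vanishes, or all parts are positive and can be lowered by one. -/
def succEquiv (k m : ℕ) :
    BoxPartition (k + 1) (m + 1) ≃ BoxPartition (k + 1) m ⊕ BoxPartition k (m + 1) where
  toFun f :=
    if h : f k = 0 then
      .inr ⟨f, f.antitone, f.le, fun t ht => Nat.le_zero.1 (h ▸ f.antitone ht)⟩
    else
      .inl ⟨fun t => f t - 1, fun _ _ hst => Nat.sub_le_sub_right (f.antitone hst) 1,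
        Nat.sub_le_sub_right f.le 1, fun t ht => by simp [f.eq_zero t ht]⟩
  invFun
    | .inl g => ⟨fun t => if t ≤ k then g t + 1 else 0,
        fun s t hst => by have := g.antitone hst; dsimp only; split_ifs <;> omega,
        by simpa using g.le, fun t ht => if_neg (by omega)⟩
    | .inr g => ⟨g, g.antitone, g.le, fun t ht => g.eq_zero t (by omega)⟩
  left_inv f := by
    by_cases h : f k = 0
    · simp [h]
    · ext t
      have := @f.antitone t k
      have := f.eq_zero t
      simp only [h, dite_false]
      split_ifs <;> omega
  right_inv
    | .inl g => by
      simp only [le_refl, if_true, Nat.add_one_ne_zero, dite_false, Sum.inl.injEq]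
      ext t
      by_cases ht : t ≤ k
      · simp [ht]
      · simp [ht, g.eq_zero t (by omega)]
    | .inr g => by simp [g.eq_zero k le_rfl]

theorem natCard_eq_choose (k m : ℕ) : Nat.card (BoxPartition k m) = (k + m).choose k := by
  induction k generalizing m with
  | zero => simp
  | succ k ihk =>
    induction m with
    | zero => simp
    | succ m ihm =>
      rw [Nat.card_congr (succEquiv k m), Nat.card_sum, ihm, ihk,
        show k + 1 + (m + 1) = k + m + 1 + 1 by omega, choose_succ_succ,
        show k + 1 + m = k + m + 1 by omega, show k + (m + 1) = k + m + 1 by omega, add_comm]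

end BoxPartition

section TailSwap

variable {a b c d f g : ℕ → ℕ} {i j : ℕ}

def spliceDelay (f g : ℕ → ℕ) (i : ℕ) : ℕ → ℕ :=
  fun t => if t ≤ i then f t else g (t - 1)

def spliceAdvance (f g : ℕ → ℕ) (i : ℕ) : ℕ → ℕ :=
  fun t => if t < i then f t else g (t + 1)

lemma antitone_spliceDelay (hf : Antitone f) (hg : Antitone g) (h : g i ≤ f i) :
    Antitone (spliceDelay f g i) := by
  intro s t hst
  unfold spliceDelay
  split_ifs with ht hs hs
  · exact hf hst
  · omega
  · exact (hg (show i ≤ t - 1 by omega)).trans (h.trans (hf hs))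
  · exact hg (by omega)

lemma antitone_spliceAdvance (hf : Antitone f) (hg : Antitone g)
    (h : ∀ s < i, g (s + 1) ≤ f s) : Antitone (spliceAdvance f g i) := by
  intro s t hst
  unfold spliceAdvance
  split_ifs with ht hs hs
  · exact hf hst
  · omega
  · exact (hg (show s + 1 ≤ t + 1 by omega)).trans (h s hs)
  · exact hg (by omega)

/-- `(a, b) ↦ ((b₀ - 1, …, bᵢ - 1, aᵢ, aᵢ₊₁, …), (a₀ + 1, …, aᵢ₋₁ + 1, bᵢ₊₁, bᵢ₊₂, …))` -/
def tailSwap (p : (ℕ → ℕ) × (ℕ → ℕ)) (i : ℕ) : (ℕ → ℕ) × (ℕ → ℕ) :=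
  (spliceDelay (p.2 - 1) p.1 i, spliceAdvance (p.1 + 1) p.2 i)

def tailSwapInv (q : (ℕ → ℕ) × (ℕ → ℕ)) (j : ℕ) : (ℕ → ℕ) × (ℕ → ℕ) :=
  (spliceAdvance (q.2 - 1) q.1 j, spliceDelay (q.1 + 1) q.2 j)

lemma tailSwapInv_tailSwap (hb : Antitone b) (hi : a i < b i) :
    tailSwapInv (tailSwap (a, b) i) i = (a, b) := by
  ext t <;> simp only [tailSwap, tailSwapInv, spliceDelay, spliceAdvance, Pi.add_apply,
    Pi.sub_apply, Pi.one_apply]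
  · split_ifs <;> grind
  · have := @hb t i
    split_ifs <;> grind

lemma tailSwap_tailSwapInv (hj : ∀ t < j, c t + 2 ≤ d t) :
    tailSwap (tailSwapInv (c, d) j) j = (c, d) := by
  ext t <;> simp only [tailSwap, tailSwapInv, spliceDelay, spliceAdvance, Pi.add_apply,
    Pi.sub_apply, Pi.one_apply]
  · split_ifs <;> grind
  · have := hj t
    split_ifs <;> grind

lemma antitone_tailSwap (ha : Antitone a) (hb : Antitone b) (hi : a i < b i)
    (hmin : ∀ t < i, b t ≤ a t) :
    Antitone (tailSwap (a, b) i).1 ∧ Antitone (tailSwap (a, b) i).2 :=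
  ⟨antitone_spliceDelay (fun _ _ h => Nat.sub_le_sub_right (hb h) 1) ha (by simp; omega),
    antitone_spliceAdvance (ha.add_const 1) hb
      fun s hs => (hb (Nat.le_add_right s 1)).trans ((hmin s hs).trans (by simp))⟩

lemma antitone_tailSwapInv (hc : Antitone c) (hd : Antitone d) (hj : d j ≤ c j + 1)
    (hmin : ∀ t < j, c t + 2 ≤ d t) :
    Antitone (tailSwapInv (c, d) j).1 ∧ Antitone (tailSwapInv (c, d) j).2 :=
  ⟨antitone_spliceAdvance (fun _ _ h => Nat.sub_le_sub_right (hd h) 1) hc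
      fun s hs => by have := hmin s hs; have := hc (Nat.le_add_right s 1); simp; omega,
    antitone_spliceDelay (hc.add_const 1) hd hj⟩

lemma tailSwap_firstTouch (hb : Antitone b) (hi : a i < b i) (hmin : ∀ t < i, b t ≤ a t) :
    (tailSwap (a, b) i).2 i ≤ (tailSwap (a, b) i).1 i + 1 ∧
      ∀ t < i, (tailSwap (a, b) i).1 t + 2 ≤ (tailSwap (a, b) i).2 t := by
  simp only [tailSwap, spliceDelay, spliceAdvance, Pi.add_apply, Pi.sub_apply, Pi.one_apply]
  refine ⟨?_, fun t ht => ?_⟩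
  · have := hb (Nat.le_add_right i 1)
    simp; omega
  · have := hmin t ht
    have := hb ht.le
    simp [ht, ht.le]; omega

lemma tailSwapInv_firstCross (hc : Antitone c) (hmin : ∀ t < j, c t + 2 ≤ d t) :
    (tailSwapInv (c, d) j).1 j < (tailSwapInv (c, d) j).2 j ∧
      ∀ t < j, (tailSwapInv (c, d) j).2 t ≤ (tailSwapInv (c, d) j).1 t := by
  simp only [tailSwapInv, spliceDelay, spliceAdvance, Pi.add_apply, Pi.sub_apply, Pi.one_apply]
  refine ⟨?_, fun t ht => ?_⟩
  · have := hc (Nat.le_add_right j 1)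
    simp; omega
  · have := hmin t ht
    simp [ht, ht.le]; omega

lemma find_eq_of_firstCross (h : a i < b i ∧ ∀ t < i, b t ≤ a t) (hex : ∃ t, a t < b t) :
    Nat.find hex = i :=
  (Nat.find_eq_iff hex).2 ⟨h.1, fun t ht => not_lt.2 (h.2 t ht)⟩

lemma find_eq_of_firstTouch (h : d i ≤ c i + 1 ∧ ∀ t < i, c t + 2 ≤ d t)
    (hex : ∃ t, d t ≤ c t + 1) : Nat.find hex = i :=
  (Nat.find_eq_iff hex).2 ⟨h.1, fun t ht => by have := h.2 t ht; omega⟩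

end TailSwap

namespace BoxPartition

variable {k m : ℕ}

lemma exists_touch (c : BoxPartition (k + 2) m) (d : BoxPartition k (m + 2)) :
    ∃ t, d t ≤ c t + 1 :=
  ⟨k, by simp [d.eq_zero k le_rfl]⟩

noncomputable def tailSwapAtFirstCrossing (k m : ℕ)
    (p : {p : BoxPartition (k + 1) (m + 1) × BoxPartition (k + 1) (m + 1) // ∃ t, p.1 t < p.2 t}) :
    BoxPartition (k + 2) m × BoxPartition k (m + 2) :=
  let a := p.1.1
  let b := p.1.2
  let i := Nat.find p.2
  have hi : a i < b i := Nat.find_spec p.2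
  have hik : i ≤ k := Nat.lt_succ_iff.1 (b.lt_of_pos (by omega))
  have ha := antitone_tailSwap a.antitone b.antitone hi fun t ht => not_lt.1 (Nat.find_min p.2 ht)
  (⟨(tailSwap (a, b) i).1, ha.1, by simp [tailSwap, spliceDelay]; have := b.le; omega,
      fun t ht => by
        simp [tailSwap, spliceDelay, show ¬ t ≤ i by omega, a.eq_zero (t - 1) (by omega)]⟩,
    ⟨(tailSwap (a, b) i).2, ha.2, by
      simp [tailSwap, spliceAdvance]; have := a.apply_le 0; have := b.apply_le 1
      split_ifs <;> omega,
      fun t ht => by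
        simp [tailSwap, spliceAdvance, show ¬ t < i by omega, b.eq_zero (t + 1) (by omega)]⟩)

noncomputable def tailSwapInvAtFirstTouch (k m : ℕ)
    (q : BoxPartition (k + 2) m × BoxPartition k (m + 2)) :
    {p : BoxPartition (k + 1) (m + 1) × BoxPartition (k + 1) (m + 1) // ∃ t, p.1 t < p.2 t} :=
  let c := q.1
  let d := q.2
  let j := Nat.find (exists_touch c d)
  have hmin : ∀ t < j, c t + 2 ≤ d t :=
    fun t ht => by have := Nat.find_min (exists_touch c d) ht; omega
  have hjk : j ≤ k := Nat.find_min' _ (by simp [d.eq_zero k le_rfl])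
  have hc := antitone_tailSwapInv c.antitone d.antitone (Nat.find_spec (exists_touch c d)) hmin
  ⟨(⟨(tailSwapInv (c, d) j).1, hc.1, by
      simp [tailSwapInv, spliceAdvance]; have := c.apply_le 1; have := d.apply_le 0
      split_ifs <;> omega,
      fun t ht => by
        simp [tailSwapInv, spliceAdvance, show ¬ t < j by omega, c.eq_zero (t + 1) (by omega)]⟩,
    ⟨(tailSwapInv (c, d) j).2, hc.2, by simp [tailSwapInv, spliceDelay]; have := c.le; omega,
      fun t ht => by
        simp [tailSwapInv, spliceDelay, show ¬ t ≤ j by omega, d.eq_zero (t - 1) (by omega)]⟩),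
    ⟨j, (tailSwapInv_firstCross c.antitone hmin).1⟩⟩

/-- The Lindström–Gessel–Viennot tail swap at the first crossing. -/
noncomputable def crossingEquiv (k m : ℕ) :
    {p : BoxPartition (k + 1) (m + 1) × BoxPartition (k + 1) (m + 1) // ∃ t, p.1 t < p.2 t} ≃
      BoxPartition (k + 2) m × BoxPartition k (m + 2) where
  toFun := tailSwapAtFirstCrossing k m
  invFun := tailSwapInvAtFirstTouch k m
  left_inv p := by
    obtain ⟨⟨a, b⟩, hex⟩ := p
    have hi : a (Nat.find hex) < b (Nat.find hex) := Nat.find_spec hex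
    have hmin : ∀ t < Nat.find hex, b t ≤ a t := fun t ht => not_lt.1 (Nat.find_min hex ht)
    refine Subtype.ext (Prod.ext (BoxPartition.ext ?_) (BoxPartition.ext ?_)) <;>
      dsimp only [tailSwapAtFirstCrossing, tailSwapInvAtFirstTouch] <;>
      rw [find_eq_of_firstTouch (tailSwap_firstTouch b.antitone hi hmin),
        tailSwapInv_tailSwap b.antitone hi]
  right_inv q := by
    obtain ⟨c, d⟩ := q
    have hmin : ∀ t < Nat.find (exists_touch c d), c t + 2 ≤ d t :=
      fun t ht => by have := Nat.find_min (exists_touch c d) ht; omega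
    refine Prod.ext (BoxPartition.ext ?_) (BoxPartition.ext ?_) <;>
      dsimp only [tailSwapAtFirstCrossing, tailSwapInvAtFirstTouch] <;>
      rw [find_eq_of_firstCross (tailSwapInv_firstCross c.antitone hmin),
        tailSwap_tailSwapInv hmin]

theorem natCard_nested_add_choose_mul_choose (k m : ℕ) :
    Nat.card {p : BoxPartition (k + 1) (m + 1) × BoxPartition (k + 1) (m + 1) //
        ∀ t, p.2 t ≤ p.1 t} + (k + m + 2).choose (k + 2) * (k + m + 2).choose k =
      (k + m + 2).choose (k + 1) ^ 2 := by
  classical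
  have hcrossing : Nat.card {p : BoxPartition (k + 1) (m + 1) × BoxPartition (k + 1) (m + 1) //
      ¬ ∀ t, p.2 t ≤ p.1 t} = (k + m + 2).choose (k + 2) * (k + m + 2).choose k := by
    rw [Nat.card_congr ((Equiv.subtypeEquivRight fun p => by simp only [not_forall, not_le]).trans
        (crossingEquiv k m)), Nat.card_prod, natCard_eq_choose, natCard_eq_choose,
      show k + 2 + m = k + m + 2 by omega, show k + (m + 2) = k + m + 2 by omega]
  have hall : Nat.card (BoxPartition (k + 1) (m + 1) × BoxPartition (k + 1) (m + 1)) =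
      (k + m + 2).choose (k + 1) ^ 2 := by
    rw [Nat.card_prod, natCard_eq_choose, sq, show k + 1 + (m + 1) = k + m + 2 by omega]
  rw [← hcrossing, ← hall, ← Nat.card_sum, Nat.card_congr (Equiv.sumCompl _)]

def level (π : Fin k → Fin m → ℕ) (hπ : ∀ i i' j, i ≤ i' → π i' j ≤ π i j) (c : ℕ) :
    BoxPartition k m where
  toFun t := if h : t < k then #{j | c ≤ π ⟨t, h⟩ j} else 0
  antitone s t hst := by
    dsimp only
    split_ifs with ht hs hs
    · exact card_le_card fun j => by simpa using fun hj => hj.trans (hπ _ _ j hst)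
    · omega
    · exact Nat.zero_le _
    · exact le_rfl
  le := by
    split_ifs
    · exact (card_le_univ _).trans (Fintype.card_fin m).le
    · exact Nat.zero_le m
  eq_zero t ht := dif_neg (by omega)

lemma lt_level_iff {π : Fin k → Fin m → ℕ} (hπ : ∀ i i' j, i ≤ i' → π i' j ≤ π i j)
    (hrow : ∀ i j j', j ≤ j' → π i j' ≤ π i j) (c : ℕ) (i : Fin k) (j : Fin m) :
    (j : ℕ) < level π hπ c i ↔ c ≤ π i j := by
  simp only [level, i.isLt, dite_true]
  exact Fin.lt_card_filter_univ_iff_apply_of_imp _ fun j' j h hc => hc.trans (hrow i j j' h)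

lemma level_mono {π : Fin k → Fin m → ℕ} (hπ : ∀ i i' j, i ≤ i' → π i' j ≤ π i j)
    {c c' : ℕ} (h : c ≤ c') (t : ℕ) : level π hπ c' t ≤ level π hπ c t := by
  simp only [level]
  split_ifs
  · exact card_le_card fun j => by simpa using h.trans
  · exact le_rfl

lemma card_filter_lt_apply (f : BoxPartition k m) (t : ℕ) :
    #{j : Fin m | (j : ℕ) < f t} = f t := by
  rw [Fin.card_filter_val_lt, min_eq_right (f.apply_le t)]

end BoxPartition

open BoxPartition in
/-- A plane partition with parts at most `2` is the pair of shapes `{π ≥ 1} ⊇ {π ≥ 2}`. -/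
def planePartitionEquiv (k m : ℕ) :
    {π : Fin k → Fin m → ℕ // (∀ i j, π i j ≤ 2) ∧
        ∀ i i' j j', i ≤ i' → j ≤ j' → π i' j' ≤ π i j} ≃
      {p : BoxPartition k m × BoxPartition k m // ∀ t, p.2 t ≤ p.1 t} where
  toFun π :=
    have hπ i i' j (h : i ≤ i') := π.2.2 i i' j j h le_rfl
    ⟨(level π.1 hπ 1, level π.1 hπ 2), level_mono hπ one_le_two⟩
  invFun p :=
    ⟨fun i j => (if (j : ℕ) < p.1.1 i then 1 else 0) + (if (j : ℕ) < p.1.2 i then 1 else 0),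
    fun i j => by dsimp only; split_ifs <;> omega,
    fun i i' j j' hi hj => by
      have := p.1.1.antitone (Fin.le_def.1 hi)
      have := p.1.2.antitone (Fin.le_def.1 hi)
      have := Fin.le_def.1 hj
      dsimp only
      split_ifs <;> omega⟩
  left_inv π := by
    have hπ i i' j (h : i ≤ i') := π.2.2 i i' j j h le_rfl
    have hrow i j j' (h : j ≤ j') := π.2.2 i i j j' le_rfl h
    ext i j
    simp only [lt_level_iff hπ hrow]
    have := π.2.1 i j
    split_ifs <;> omega
  right_inv p := by
    obtain ⟨⟨a, b⟩, hba⟩ := p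
    refine Subtype.ext (Prod.ext (BoxPartition.ext (funext fun t => ?_))
      (BoxPartition.ext (funext fun t => ?_))) <;> simp only [level] <;> split_ifs with ht
    · refine (congrArg card (filter_congr fun j _ => ?_)).trans (a.card_filter_lt_apply t)
      have : b t ≤ a t := hba t
      split_ifs <;> omega
    · exact (a.eq_zero t (not_lt.1 ht)).symm
    · refine (congrArg card (filter_congr fun j _ => ?_)).trans (b.card_filter_lt_apply t)
      have : b t ≤ a t := hba t
      split_ifs <;> omega
    · exact (b.eq_zero t (not_lt.1 ht)).symm

lemma sq_choose_sub_choose_mul_choose (m : ℕ) :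
    ((m + m + 2).choose (m + 1) : ℚ) ^ 2 - (m + m + 2).choose (m + 2) * (m + m + 2).choose m =
      (2 * (m + 1))! * (2 * (m + 1) + 1)! / ((m + 1)! * (m + 1 + 1)!) ^ 2 := by
  rw [cast_choose ℚ (show m + 1 ≤ m + m + 2 by omega),
    cast_choose ℚ (show m + 2 ≤ m + m + 2 by omega), cast_choose ℚ (show m ≤ m + m + 2 by omega),
    show m + m + 2 - (m + 1) = m + 1 by omega,
    show m + m + 2 - (m + 2) = m by omega, show m + m + 2 - m = m + 2 by omega,
    show 2 * (m + 1) = m + m + 2 by ring]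
  push_cast [factorial_succ]
  field_simp
  ring

theorem square_plane_partitions_le_two_count_general (n : ℕ) :
    (Nat.card {π : Fin n → Fin n → ℕ //
        (∀ i j, π i j ≤ 2) ∧
        (∀ i i' j j', i ≤ i' → j ≤ j' → π i' j' ≤ π i j)} : ℚ) =
      ((2 * n).factorial * (2 * n + 1).factorial : ℚ) /
        ((n.factorial * (n + 1).factorial : ℚ)) ^ 2 := by
  cases n with
  | zero => simp
  | succ m =>
    have hcount := BoxPartition.natCard_nested_add_choose_mul_choose m m
    rw [Nat.card_congr (planePartitionEquiv _ _), ← sq_choose_sub_choose_mul_choose,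
      eq_sub_iff_add_eq]
    exact_mod_cast hcount

/-- For `n ≥ 1`, the number of plane partitions with `n` rows, `n` columns and
largest part at most 2 equals `(2n)!(2n+1)! / (n!(n+1)!)²`. -/
theorem square_plane_partitions_le_two_count (n : ℕ) (hn : 1 ≤ n) :
    (Nat.card {π : Fin n → Fin n → ℕ //
        (∀ i j, π i j ≤ 2) ∧
        (∀ i i' j j', i ≤ i' → j ≤ j' → π i' j' ≤ π i j)} : ℚ) =
      ((2 * n).factorial * (2 * n + 1).factorial : ℚ) /
        ((n.factorial * (n + 1).factorial : ℚ)) ^ 2 :=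
  square_plane_partitions_le_two_count_general n
end

section
/- For m ≥ 1 and n ≥ 1, the number of pairs (f,g) of functions f, g : Fin m → Fin (n+1) with max_x f(x) ≤ min_y g(y) equals ∑_{i=1}^{n+1} ((n+2-i)^m - (n+1-i)^m) · i^m. -/
open Finset

lemma card_ge_aux (N j : ℕ) : (univ.filter (fun v : Fin N => j ≤ (v:ℕ))).card = N - j := by
  rw [← Fintype.card_subtype]
  rw [← Fintype.card_of_bijective (f := fun x : Fin (N - j) => (⟨⟨j + x, by omega⟩, by simp⟩ : {v : Fin N // j ≤ (v:ℕ)}))]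
  · exact Fintype.card_fin _
  constructor
  · intro a b h
    simpa [Fin.ext_iff] using h
  · rintro ⟨v, h⟩
    have hv := v.isLt
    exact ⟨⟨(v:ℕ) - j, by omega⟩, by simp [Subtype.ext_iff, Fin.ext_iff]; omega⟩

lemma card_le_aux (N k : ℕ) : (univ.filter (fun v : Fin N => (v:ℕ) ≤ k)).card = min (k+1) N := by
  rw [← Fintype.card_subtype]
  rw [← Fintype.card_of_bijective (f := fun x : Fin (min (k+1) N) => (⟨⟨x, by omega⟩, by simp; omega⟩ : {v : Fin N // (v:ℕ) ≤ k}))]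
  · exact Fintype.card_fin _
  constructor
  · intro a b h; simpa [Fin.ext_iff] using h
  · rintro ⟨v, h⟩
    have hv := v.isLt
    exact ⟨⟨(v:ℕ), by omega⟩, by simp [Subtype.ext_iff, Fin.ext_iff]⟩

lemma count_pi (m N : ℕ) (s : Finset (Fin N)) :
    (univ.filter (fun f : Fin m → Fin N => ∀ x, f x ∈ s)).card = s.card ^ m := by
  have h : univ.filter (fun f : Fin m → Fin N => ∀ x, f x ∈ s) = Fintype.piFinset (fun _ => s) := by
    ext f; simp [Fintype.mem_piFinset]
  rw [h, Fintype.card_piFinset]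
  simp

lemma count_le (m n k : ℕ) :
    (univ.filter (fun f : Fin m → Fin (n+1) => ∀ x, (f x : ℕ) ≤ k)).card = (min (k+1) (n+1))^m := by
  have e : univ.filter (fun f : Fin m → Fin (n+1) => ∀ x, (f x : ℕ) ≤ k)
      = univ.filter (fun f : Fin m → Fin (n+1) => ∀ x, f x ∈ univ.filter (fun v : Fin (n+1) => (v:ℕ) ≤ k)) := by
    ext f; simp
  rw [e, count_pi, card_le_aux]

lemma count_ge (m n j : ℕ) :
    (univ.filter (fun g : Fin m → Fin (n+1) => ∀ y, j ≤ (g y : ℕ))).card = (n+1-j)^m := by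
  have e : univ.filter (fun g : Fin m → Fin (n+1) => ∀ y, j ≤ (g y : ℕ))
      = univ.filter (fun f : Fin m → Fin (n+1) => ∀ x, f x ∈ univ.filter (fun v : Fin (n+1) => j ≤ (v:ℕ))) := by
    ext f; simp
  rw [e, count_pi, card_ge_aux]


lemma count_inf (m n : ℕ) (hm : 1 ≤ m) (hne : (Finset.univ : Finset (Fin m)).Nonempty)
    (k : Fin (n+1)) :
    (univ.filter (fun g : Fin m → Fin (n+1) =>
        Finset.univ.inf' hne g = k)).card
      = (n+1-(k:ℕ))^m - (n-(k:ℕ))^m := by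
  have hsplit : (univ.filter (fun g : Fin m → Fin (n+1) => ∀ y, (k:ℕ) ≤ (g y : ℕ)))
      = (univ.filter (fun g : Fin m → Fin (n+1) => Finset.univ.inf' hne g = k))
        ∪ (univ.filter (fun g : Fin m → Fin (n+1) => ∀ y, (k:ℕ)+1 ≤ (g y : ℕ))) := by
    rw [← filter_or]
    apply filter_congr
    intro g _
    constructor
    · intro h
      by_cases h2 : ∀ y, (k:ℕ)+1 ≤ (g y : ℕ)
      · exact Or.inr h2
      · left
        apply le_antisymm
        · push_neg at h2
          obtain ⟨y, hy⟩ := h2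
          exact le_trans (Finset.inf'_le _ (Finset.mem_univ y)) (by rw [Fin.le_def]; omega)
        · rw [Finset.le_inf'_iff]
          intro y _
          rw [Fin.le_def]
          exact h y
    · rintro (h | h) y
      · have h4 := Finset.inf'_le g (Finset.mem_univ y)
        rw [h] at h4
        exact Fin.le_def.mp h4
      · have := h y
        omega
  have hdisj : Disjoint
      (univ.filter (fun g : Fin m → Fin (n+1) => Finset.univ.inf' hne g = k))
      (univ.filter (fun g : Fin m → Fin (n+1) => ∀ y, (k:ℕ)+1 ≤ (g y : ℕ))) := by
    rw [Finset.disjoint_filter]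
    intro g _ hg h2
    have := h2 ⟨0, hm⟩
    have h3 : k < Finset.univ.inf' hne g := by
      rw [Finset.lt_inf'_iff]
      intro y _
      rw [Fin.lt_def]
      exact h2 y
    omega
  have hcard : (n+1-(k:ℕ))^m
      = (univ.filter (fun g : Fin m → Fin (n+1) => Finset.univ.inf' hne g = k)).card
        + (n-(k:ℕ))^m := by
    rw [← count_ge m n (k:ℕ), hsplit, Finset.card_union_of_disjoint hdisj,
      count_ge m n ((k:ℕ)+1)]
    have e3 : n+1-((k:ℕ)+1) = n-(k:ℕ) := by omega
    rw [e3]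
  have hk := k.isLt
  have hle : (n-(k:ℕ))^m ≤ (n+1-(k:ℕ))^m := by
    apply Nat.pow_le_pow_left
    omega
  omega



/-- For `m, n ≥ 1`, the number of pairs `(f,g)` of functions
`f, g : Fin m → Fin (n+1)` with `max f ≤ min g` equals
`∑_{i=1}^{n+1} ((n+2-i)^m - (n+1-i)^m) · i^m`. -/
theorem max_le_min_pairs_count (m n : ℕ) (hm : 1 ≤ m) (hn : 1 ≤ n) :
    Nat.card {p : (Fin m → Fin (n + 1)) × (Fin m → Fin (n + 1)) //
        Finset.univ.sup' ⟨⟨0, hm⟩, Finset.mem_univ _⟩ p.1 ≤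
          Finset.univ.inf' ⟨⟨0, hm⟩, Finset.mem_univ _⟩ p.2} =
      ∑ i ∈ Finset.Icc 1 (n + 1), ((n + 2 - i) ^ m - (n + 1 - i) ^ m) * i ^ m := by
  classical
  have hne : (Finset.univ : Finset (Fin m)).Nonempty := ⟨⟨0, hm⟩, Finset.mem_univ _⟩
  rw [Nat.card_eq_fintype_card, Fintype.card_subtype]
  change (univ.filter (fun p : (Fin m → Fin (n+1)) × (Fin m → Fin (n+1)) =>
      Finset.univ.sup' hne p.1 ≤ Finset.univ.inf' hne p.2)).card = _
  set S := univ.filter (fun p : (Fin m → Fin (n+1)) × (Fin m → Fin (n+1)) =>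
      Finset.univ.sup' hne p.1 ≤ Finset.univ.inf' hne p.2) with hS
  have hfib : S.card = ∑ k : Fin (n+1), (S.filter (fun p => Finset.univ.inf' hne p.2 = k)).card :=
    Finset.card_eq_sum_card_fiberwise (fun p _ => Finset.mem_univ _)
  rw [hfib]
  have hterm : ∀ k : Fin (n+1),
      (S.filter (fun p => Finset.univ.inf' hne p.2 = k)).card
        = ((k:ℕ)+1)^m * ((n+1-(k:ℕ))^m - (n-(k:ℕ))^m) := by
    intro k
    have : S.filter (fun p => Finset.univ.inf' hne p.2 = k)
        = (univ ×ˢ univ).filter (fun p : (Fin m → Fin (n+1)) × (Fin m → Fin (n+1)) =>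
            (∀ x, (p.1 x : ℕ) ≤ (k:ℕ)) ∧ Finset.univ.inf' hne p.2 = k) := by
      rw [hS, filter_filter, ← Finset.univ_product_univ]
      apply filter_congr
      intro p _
      constructor
      · rintro ⟨h1, h2⟩
        refine ⟨fun x => ?_, h2⟩
        have := le_trans (Finset.le_sup' (f := p.1) (Finset.mem_univ x)) (h2 ▸ h1)
        exact this
      · rintro ⟨h1, h2⟩
        refine ⟨?_, h2⟩
        rw [Finset.sup'_le_iff]
        intro x _
        rw [h2]
        exact h1 x
    rw [this, Finset.filter_product (fun f : Fin m → Fin (n+1) => ∀ x, (f x : ℕ) ≤ (k:ℕ))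
      (fun g : Fin m → Fin (n+1) => Finset.univ.inf' hne g = k),
      Finset.card_product, count_le, count_inf m n hm hne k]
    have := k.isLt
    congr 2
    omega
  rw [Finset.sum_congr rfl (fun k _ => hterm k)]
  rw [Fin.sum_univ_eq_sum_range (fun k => (k+1)^m * ((n+1-k)^m - (n-k)^m))]
  refine Finset.sum_nbij' (fun k => k + 1) (fun i => i - 1) ?_ ?_ ?_ ?_ ?_
  · intro k hk; simp at hk ⊢; omega
  · intro i hi; simp at hi ⊢; omega
  · intro k hk; simp
  · intro i hi; simp at hi; omega
  · intro k hk
    simp only [Finset.mem_range] at hk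
    have e1 : n + 2 - (k+1) = n + 1 - k := by omega
    have e2 : n + 1 - (k+1) = n - k := by omega
    rw [e1, e2, Nat.mul_comm]
end
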